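/- Let p_n# denote the product of the first n prime numbers and let z_k denote the k-th prime. For every n ≥ 4, the square of the (n+1)-st prime is strictly less than p_n#, i.e., (z_{n+1})^2 < p_n#. -/
import Mathlib

/-- The product of the first `n` prime numbers. -/
noncomputable def primorialFirst (n : ℕ) : ℕ := ∏ i ∈ Finset.range n, Nat.nth Nat.Prime i

/-- The `n`-th prime number (1-indexed), i.e. `nthPrime 1 = 2`. -/
noncomputable def nthPrime (n : ℕ) : ℕ := Nat.nth Nat.Prime (n - 1)

lemma nth_prime_succ_lt_two_mul (k : ℕ) :
    Nat.nth Nat.Prime (k + 1) < 2 * Nat.nth Nat.Prime k := by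
  set m := Nat.nth Nat.Prime k with hmdef
  have hm : m.Prime := Nat.prime_nth_prime k
  obtain ⟨q, hq, hmq, hq2⟩ := Nat.exists_prime_lt_and_le_two_mul m hm.pos.ne'
  have h1 : Nat.nth Nat.Prime (k + 1) ≤ q := by
    by_contra h
    push_neg at h
    have := Nat.le_nth_of_lt_nth_succ h hq
    omega
  have h2 : q ≠ 2 * m := by
    intro h
    have := (h ▸ hq).eq_one_or_self_of_dvd 2 ⟨m, rfl⟩
    have := hm.two_le
    omega
  omega

lemma nth_prime_four : Nat.nth Nat.Prime 4 = 11 := by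
  have := Nat.nth_count (p := Nat.Prime) (n := 11) (by norm_num)
  rwa [show Nat.count Nat.Prime 11 = 4 by decide] at this

/-- For every `n ≥ 4`, the square of the `(n+1)`-st prime is strictly less than
the `n`-th primorial. -/
theorem nextPrime_sq_lt_primorial (n : ℕ) (hn : 4 ≤ n) :
    (nthPrime (n + 1)) ^ 2 < primorialFirst n := by
  induction n, hn using Nat.le_induction with
  | base =>
    have h0 : Nat.nth Nat.Prime 0 = 2 := Nat.nth_prime_zero_eq_two
    have h1 : Nat.nth Nat.Prime 1 = 3 := Nat.nth_prime_one_eq_three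
    have h2 : Nat.nth Nat.Prime 2 = 5 := by
      have := Nat.nth_count (p := Nat.Prime) (n := 5) (by norm_num)
      rwa [show Nat.count Nat.Prime 5 = 2 by decide] at this
    have h3 : Nat.nth Nat.Prime 3 = 7 := by
      have := Nat.nth_count (p := Nat.Prime) (n := 7) (by norm_num)
      rwa [show Nat.count Nat.Prime 7 = 3 by decide] at this
    simp only [nthPrime, primorialFirst]
    rw [show (4 + 1 - 1 : ℕ) = 4 from rfl, nth_prime_four,
      Finset.prod_range_succ, Finset.prod_range_succ, Finset.prod_range_succ,
      Finset.prod_range_one, h0, h1, h2, h3]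
    norm_num
  | succ n hn ih =>
    simp only [nthPrime, primorialFirst, Nat.add_sub_cancel] at *
    rw [Finset.prod_range_succ]
    have hb := nth_prime_succ_lt_two_mul n
    have hge : n + 2 ≤ Nat.nth Nat.Prime n := Nat.add_two_le_nth_prime n
    nlinarith [ih, hb, hge, sq_nonneg (Nat.nth Nat.Prime n)]
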